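/- arXiv:1310.5617 — 2 statements merged into one kernel-verified Lean document; each statement's English description precedes it below -/
import Mathlib

section
/- Fix T > 0, σ > 0, σ₀ ≥ 0 and θ ≠ 0, and let c be the Ornstein–Uhlenbeck bridge covariance. Let f : [0,T] → ℝ be continuous and let g : [0,T] → ℝ be twice continuously differentiable such that: (i) g''(s) − θ² g(s) = −σ² f(s) for all s ∈ [0,T]; (ii) g(T) = 0; (iii) σ₀² g'(0) = (σ² − θσ₀²) g(0). Then g(s) = ∫₀ᵀ c(s,t) f(t) dt for all s ∈ [0,T]. -/
open Real Set intervalIntegral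

/-!
Write `c(s,t) = u(s ∧ t) v(s ∨ t) / (2θ)` with `u(t) = σ² e^{θt} + (2θσ₀² − σ²) e^{−θt}` and
`v(t) = e^{−θt} − (e^{−θT}/u(T)) u(t)`: both solve `φ'' = θ²φ`, their Wronskian is `2θσ²`,
`u` satisfies the Robin condition at `0` and `v(T) = 0`. For such `φ` the Lagrange identity
`(φ' g − φ g')' = φ (θ² g − g'') = σ² φ f` integrates `∫ c(s,·) f` over `[0,s]` and `[s,T]` into
boundary terms; those at `0` and `T` vanish by the boundary conditions on `g`, and those at `s`
add up to the Wronskian times `g(s)`.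
-/

section Green

variable {κ a b : ℝ} {g g' g'' h : ℝ → ℝ}

theorem integral_mul_eq_lagrange_sub {p q : ℝ} {φ : ℝ → ℝ}
    (hφ : Differentiable ℝ φ) (hφ' : ∀ t, HasDerivAt (deriv φ) (κ * φ t) t)
    (hg : ∀ t ∈ Icc a b, HasDerivWithinAt g (g' t) (Icc a b) t)
    (hg' : ∀ t ∈ Icc a b, HasDerivWithinAt g' (g'' t) (Icc a b) t)
    (hh : ContinuousOn h (Icc a b)) (hode : ∀ t ∈ Icc a b, g'' t = κ * g t - h t)
    (hap : a ≤ p) (hpq : p ≤ q) (hqb : q ≤ b) :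
    ∫ t in p..q, φ t * h t =
      (deriv φ q * g q - φ q * g' q) - (deriv φ p * g p - φ p * g' p) := by
  have hsub : Icc p q ⊆ Icc a b := Icc_subset_Icc hap hqb
  have hdφ : Continuous (deriv φ) :=
    continuous_iff_continuousAt.2 fun t => (hφ' t).continuousAt
  have hgc : ContinuousOn g (Icc a b) := fun t ht => (hg t ht).continuousWithinAt
  have hg'c : ContinuousOn g' (Icc a b) := fun t ht => (hg' t ht).continuousWithinAt
  refine integral_eq_sub_of_hasDerivAt_of_le (f := fun t => deriv φ t * g t - φ t * g' t) hpq
    ((hdφ.continuousOn.mul (hgc.mono hsub)).sub (hφ.continuous.continuousOn.mul (hg'c.mono hsub)))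
    (fun t ht => ?_) ((hφ.continuous.continuousOn.mul (hh.mono hsub)).intervalIntegrable_of_Icc hpq)
  have hnhds : Icc a b ∈ nhds t := Icc_mem_nhds (hap.trans_lt ht.1) (ht.2.trans_le hqb)
  have htab : t ∈ Icc a b := hsub (Ioo_subset_Icc_self ht)
  exact (((hφ' t).mul ((hg t htab).hasDerivAt hnhds)).sub
    ((hφ t).hasDerivAt.mul ((hg' t htab).hasDerivAt hnhds))).congr_deriv
    (by rw [hode t htab]; ring)

theorem mul_eq_integral_green_kernel {w s : ℝ} {u v : ℝ → ℝ}
    (hu : Differentiable ℝ u) (hu' : ∀ t, HasDerivAt (deriv u) (κ * u t) t)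
    (hv : Differentiable ℝ v) (hv' : ∀ t, HasDerivAt (deriv v) (κ * v t) t)
    (hW : v s * deriv u s - u s * deriv v s = w)
    (hg : ∀ t ∈ Icc a b, HasDerivWithinAt g (g' t) (Icc a b) t)
    (hg' : ∀ t ∈ Icc a b, HasDerivWithinAt g' (g'' t) (Icc a b) t)
    (hh : ContinuousOn h (Icc a b)) (hode : ∀ t ∈ Icc a b, g'' t = κ * g t - h t)
    (hua : deriv u a * g a - u a * g' a = 0) (hvb : deriv v b * g b - v b * g' b = 0)
    (hs : s ∈ Icc a b) :
    w * g s = ∫ t in a..b, u (min s t) * v (max s t) * h t := by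
  have hcont : ContinuousOn (fun t => u (min s t) * v (max s t) * h t) (Icc a b) :=
    ((hu.continuous.comp (continuous_const.min continuous_id)).mul
      (hv.continuous.comp (continuous_const.max continuous_id))).continuousOn.mul hh
  have hleft : ∫ t in a..s, u (min s t) * v (max s t) * h t = v s * ∫ t in a..s, u t * h t := by
    rw [← integral_const_mul]
    refine integral_congr fun t ht => ?_
    rw [uIcc_of_le hs.1] at ht
    simp only [min_eq_right ht.2, max_eq_left ht.2]
    ring
  have hright : ∫ t in s..b, u (min s t) * v (max s t) * h t = u s * ∫ t in s..b, v t * h t := by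
    rw [← integral_const_mul]
    refine integral_congr fun t ht => ?_
    rw [uIcc_of_le hs.2] at ht
    simp only [min_eq_left ht.1, max_eq_right ht.1]
    ring
  rw [← integral_add_adjacent_intervals (b := s)
      ((hcont.mono (Icc_subset_Icc le_rfl hs.2)).intervalIntegrable_of_Icc hs.1)
      ((hcont.mono (Icc_subset_Icc hs.1 le_rfl)).intervalIntegrable_of_Icc hs.2),
    hleft, hright, integral_mul_eq_lagrange_sub hu hu' hg hg' hh hode le_rfl hs.1 hs.2,
    integral_mul_eq_lagrange_sub hv hv' hg hg' hh hode hs.1 hs.2 le_rfl, hua, hvb, ← hW]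
  ring

end Green

noncomputable def expComb (θ A B t : ℝ) : ℝ :=
  A * exp (θ * t) + B * exp (-θ * t)

section ExpComb

variable (θ A B C D t : ℝ)

theorem hasDerivAt_expComb :
    HasDerivAt (expComb θ A B) (expComb θ (θ * A) (-(θ * B)) t) t := by
  have hexp (k : ℝ) : HasDerivAt (fun t => exp (k * t)) (exp (k * t) * k) t := by
    simpa using ((hasDerivAt_id t).const_mul k).exp
  exact (((hexp θ).const_mul A).add ((hexp (-θ)).const_mul B)).congr_deriv
    (by simp only [expComb]; ring)

theorem deriv_expComb : deriv (expComb θ A B) = expComb θ (θ * A) (-(θ * B)) :=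
  funext fun t => (hasDerivAt_expComb θ A B t).deriv

theorem differentiable_expComb : Differentiable ℝ (expComb θ A B) :=
  fun t => (hasDerivAt_expComb θ A B t).differentiableAt

theorem hasDerivAt_deriv_expComb :
    HasDerivAt (deriv (expComb θ A B)) (θ ^ 2 * expComb θ A B t) t := by
  rw [deriv_expComb]
  exact (hasDerivAt_expComb θ (θ * A) (-(θ * B)) t).congr_deriv (by simp only [expComb]; ring)

theorem expComb_zero : expComb θ A B 0 = A + B := by
  simp [expComb]

theorem expComb_wronskian :
    expComb θ C D t * deriv (expComb θ A B) t - expComb θ A B t * deriv (expComb θ C D) t =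
      2 * θ * (A * D - B * C) := by
  have hinv : exp (θ * t) * exp (-θ * t) = 1 := by rw [← exp_add]; simp
  simp only [deriv_expComb, expComb]
  linear_combination 2 * θ * (A * D - B * C) * hinv

end ExpComb

noncomputable def ouU (σ σ₀ θ : ℝ) : ℝ → ℝ :=
  expComb θ (σ ^ 2) (2 * θ * σ₀ ^ 2 - σ ^ 2)

/-- `v(t) = e^{-θt} - (e^{-θT} / u(T)) u(t)`. -/
noncomputable def ouV (T σ σ₀ θ : ℝ) : ℝ → ℝ :=
  expComb θ (-(exp (-θ * T) / ouU σ σ₀ θ T * σ ^ 2))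
    (1 - exp (-θ * T) / ouU σ σ₀ θ T * (2 * θ * σ₀ ^ 2 - σ ^ 2))

theorem ouU_ne_zero {T σ θ : ℝ} (σ₀ : ℝ) (hT : 0 < T) (hσ : σ ≠ 0) (hθ : θ ≠ 0) :
    ouU σ σ₀ θ T ≠ 0 := by
  have hsinh : 0 < θ * (exp (θ * T) - exp (-θ * T)) := by
    rcases hθ.lt_or_gt with hneg | hpos
    · exact mul_pos_of_neg_of_neg hneg (sub_neg.2 (exp_lt_exp.2 (by nlinarith)))
    · exact mul_pos hpos (sub_pos.2 (exp_lt_exp.2 (by nlinarith)))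
  have hpos : 0 < θ * ouU σ σ₀ θ T := by
    have hrw : θ * ouU σ σ₀ θ T =
        σ ^ 2 * (θ * (exp (θ * T) - exp (-θ * T))) + 2 * (θ * σ₀) ^ 2 * exp (-θ * T) := by
      simp only [ouU, expComb]
      ring
    rw [hrw]
    exact add_pos_of_pos_of_nonneg (mul_pos (sq_pos_of_ne_zero hσ) hsinh) (by positivity)
  exact right_ne_zero_of_mul hpos.ne'

theorem ouV_self {T σ σ₀ θ : ℝ} (hU : ouU σ σ₀ θ T ≠ 0) : ouV T σ σ₀ θ T = 0 := by
  have hV : ouV T σ σ₀ θ T = exp (-θ * T) - exp (-θ * T) / ouU σ σ₀ θ T * ouU σ σ₀ θ T := by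
    simp only [ouV, ouU, expComb]
    ring
  rw [hV, div_mul_cancel₀ _ hU, sub_self]

theorem ou_wronskian (T σ σ₀ θ t : ℝ) :
    ouV T σ σ₀ θ t * deriv (ouU σ σ₀ θ) t - ouU σ σ₀ θ t * deriv (ouV T σ σ₀ θ) t =
      2 * θ * σ ^ 2 := by
  rw [ouU, ouV, expComb_wronskian]
  ring

theorem ou_bridge_covariance_eq (T σ σ₀ θ s t : ℝ) :
    (1/(2*θ)) * Real.exp (-θ*(s+t)) *
        ((2*θ*σ₀^2 - σ^2) + σ^2 * Real.exp (2*θ*(min s t)))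
      - (1/(2*θ)) * Real.exp (-θ*T) *
        ((σ^2 * Real.exp (θ*t) + (2*θ*σ₀^2 - σ^2) * Real.exp (-θ*t)) *
         (σ^2 * Real.exp (θ*s) + (2*θ*σ₀^2 - σ^2) * Real.exp (-θ*s))) /
        (σ^2 * Real.exp (θ*T) + (2*θ*σ₀^2 - σ^2) * Real.exp (-θ*T)) =
      ouU σ σ₀ θ (min s t) * ouV T σ σ₀ θ (max s t) / (2 * θ) := by
  have hsum : s + t = min s t + max s t := (min_add_max s t).symm
  have hprod : ouU σ σ₀ θ t * ouU σ σ₀ θ s = ouU σ σ₀ θ (min s t) * ouU σ σ₀ θ (max s t) := by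
    rcases le_total s t with hst | hts
    · rw [min_eq_left hst, max_eq_right hst, mul_comm]
    · rw [min_eq_right hts, max_eq_left hts]
  generalize min s t = p, max s t = q at hsum hprod ⊢
  have h1 : exp (-θ * (s + t)) = exp (-θ * q) * exp (-θ * p) := by
    rw [← exp_add, hsum]; ring_nf
  have h2 : exp (-θ * p) * exp (2 * θ * p) = exp (θ * p) := by
    rw [← exp_add]; ring_nf
  simp only [ouV, ouU, expComb] at hprod ⊢
  linear_combination (1/(2*θ)) * ((2*θ*σ₀^2 - σ^2) + σ^2 * exp (2*θ*p)) * h1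
    + (σ^2/(2*θ)) * exp (-θ*q) * h2
    - (1/(2*θ)) * exp (-θ*T) / (σ^2 * exp (θ*T) + (2*θ*σ₀^2 - σ^2) * exp (-θ*T)) * hprod

theorem ou_bridge_covariance_operator_bvp_converse_general
    (T σ σ₀ θ : ℝ) (hT : 0 < T) (hσ : 0 < σ) (hθ : θ ≠ 0)
    (c : ℝ → ℝ → ℝ)
    (hc : ∀ s t : ℝ, c s t = (1/(2*θ)) * Real.exp (-θ*(s+t)) *
        ((2*θ*σ₀^2 - σ^2) + σ^2 * Real.exp (2*θ*(min s t)))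
      - (1/(2*θ)) * Real.exp (-θ*T) *
        ((σ^2 * Real.exp (θ*t) + (2*θ*σ₀^2 - σ^2) * Real.exp (-θ*t)) *
         (σ^2 * Real.exp (θ*s) + (2*θ*σ₀^2 - σ^2) * Real.exp (-θ*s))) /
        (σ^2 * Real.exp (θ*T) + (2*θ*σ₀^2 - σ^2) * Real.exp (-θ*T)))
    (f : ℝ → ℝ) (hf : ContinuousOn f (Icc (0:ℝ) T))
    (g g' g'' : ℝ → ℝ)
    (hg' : ∀ s ∈ Icc (0:ℝ) T, HasDerivWithinAt g (g' s) (Icc (0:ℝ) T) s)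
    (hg'' : ∀ s ∈ Icc (0:ℝ) T, HasDerivWithinAt g' (g'' s) (Icc (0:ℝ) T) s)
    (hode : ∀ s ∈ Icc (0:ℝ) T, g'' s - θ^2 * g s = -(σ^2) * f s)
    (hgT : g T = 0)
    (hbd : σ₀^2 * g' 0 = (σ^2 - θ*σ₀^2) * g 0) :
    ∀ s ∈ Icc (0:ℝ) T, g s = ∫ t in (0:ℝ)..T, c s t * f t := by
  intro s hs
  have hwronskian_ne : 2 * θ * σ ^ 2 ≠ 0 := by positivity
  have hleft : deriv (ouU σ σ₀ θ) 0 * g 0 - ouU σ σ₀ θ 0 * g' 0 = 0 := by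
    rw [ouU, deriv_expComb, expComb_zero, expComb_zero]
    linear_combination (-2 * θ) * hbd
  have hright : deriv (ouV T σ σ₀ θ) T * g T - ouV T σ σ₀ θ T * g' T = 0 := by
    rw [ouV_self (ouU_ne_zero σ₀ hT hσ.ne' hθ), hgT]
    ring
  have hgreen := mul_eq_integral_green_kernel (u := ouU σ σ₀ θ) (v := ouV T σ σ₀ θ)
    (h := fun t => σ ^ 2 * f t)
    (differentiable_expComb _ _ _)
    (hasDerivAt_deriv_expComb _ _ _) (differentiable_expComb _ _ _)
    (hasDerivAt_deriv_expComb _ _ _) (ou_wronskian T σ σ₀ θ s) hg' hg''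
    (continuousOn_const.mul hf) (fun t ht => by linear_combination hode t ht) hleft hright hs
  calc g s = (2 * θ * σ ^ 2)⁻¹ * (2 * θ * σ ^ 2 * g s) := by field_simp
    _ = ∫ t in (0:ℝ)..T, c s t * f t := by
      rw [hgreen, ← integral_const_mul]
      refine integral_congr fun t _ => ?_
      rw [hc, ou_bridge_covariance_eq]
      field_simp

/-- converse of the boundary value problem characterization: a C²
function g on [0,T] satisfying g'' − θ²g = −σ²f, g(T) = 0 and
σ₀² g'(0) = (σ² − θσ₀²) g(0) is the image of f under the Ornstein–Uhlenbeck
bridge covariance operator. -/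
theorem ou_bridge_covariance_operator_bvp_converse
    (T σ σ₀ θ : ℝ) (hT : 0 < T) (hσ : 0 < σ) (hσ₀ : 0 ≤ σ₀) (hθ : θ ≠ 0)
    (c : ℝ → ℝ → ℝ)
    (hc : ∀ s t : ℝ, c s t = (1/(2*θ)) * Real.exp (-θ*(s+t)) *
        ((2*θ*σ₀^2 - σ^2) + σ^2 * Real.exp (2*θ*(min s t)))
      - (1/(2*θ)) * Real.exp (-θ*T) *
        ((σ^2 * Real.exp (θ*t) + (2*θ*σ₀^2 - σ^2) * Real.exp (-θ*t)) *
         (σ^2 * Real.exp (θ*s) + (2*θ*σ₀^2 - σ^2) * Real.exp (-θ*s))) /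
        (σ^2 * Real.exp (θ*T) + (2*θ*σ₀^2 - σ^2) * Real.exp (-θ*T)))
    (f : ℝ → ℝ) (hf : ContinuousOn f (Icc (0:ℝ) T))
    (g g' g'' : ℝ → ℝ)
    (hg' : ∀ s ∈ Icc (0:ℝ) T, HasDerivWithinAt g (g' s) (Icc (0:ℝ) T) s)
    (hg'' : ∀ s ∈ Icc (0:ℝ) T, HasDerivWithinAt g' (g'' s) (Icc (0:ℝ) T) s)
    (hg'cont : ContinuousOn g' (Icc (0:ℝ) T))
    (hg''cont : ContinuousOn g'' (Icc (0:ℝ) T))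
    (hode : ∀ s ∈ Icc (0:ℝ) T, g'' s - θ^2 * g s = -(σ^2) * f s)
    (hgT : g T = 0)
    (hbd : σ₀^2 * g' 0 = (σ^2 - θ*σ₀^2) * g 0) :
    ∀ s ∈ Icc (0:ℝ) T, g s = ∫ t in (0:ℝ)..T, c s t * f t :=
  ou_bridge_covariance_operator_bvp_converse_general T σ σ₀ θ hT hσ hθ c hc f hf g g' g'' hg' hg''
    hode hgT hbd
end

section
/- Fix T > 0, σ > 0, θ ≠ 0 and σ₀ = 0, and let c(s,t) = (1/(2θ)) e^{−θ(s+t)} (−σ² + σ² e^{2θ min(s,t)}) − (1/(2θ)) e^{−θT} σ⁴ (e^{θt} − e^{−θt})(e^{θs} − e^{−θs}) / (σ²(e^{θT} − e^{−θT})) be the corresponding Ornstein–Uhlenbeck bridge covariance. Suppose f : [0,T] → ℝ is continuous, not identically zero, λ > 0, and ∫₀ᵀ c(s,t) f(t) dt = λ f(s) for all s ∈ [0,T]. Then there exists an integer n ≥ 1 and a nonzero constant C such that λ = σ² / ((nπ/T)² + θ²) and f(t) = C sin((nπ/T)(t − T)) for all t ∈ [0,T]. In particular every positive eigenvalue of the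 covariance operator is of the form σ²/((nπ/T)² + θ²) for some n ≥ 1. -/
/-!
For `t ≤ s` the covariance factors as `c s t = σ² / (θ sinh θT) · sinh (θ t) sinh (θ (T - s))`:
up to a constant it is the Green's function of `-u'' + θ² u` with Dirichlet conditions on
`[0, T]`. Hence `G = ∫ c(·, t) f t dt` satisfies `G'' = θ² G - σ² f` with `G 0 = G T = 0`, and
the eigen-equation `G = λ f` turns this into `G'' = (θ² - σ² / λ) G`. Energy arguments show that
this Dirichlet problem has only the zero solution unless `θ² - σ² / λ = -ω²` with `sin (ω T) = 0`,
and then `G` is a multiple of `sin (ω (t - T))`.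
-/

open Real Set intervalIntegral

noncomputable def ouBridgeCov (T σ θ s t : ℝ) : ℝ :=
  (1/(2*θ)) * Real.exp (-θ*(s+t)) * (-(σ^2) + σ^2 * Real.exp (2*θ*(min s t)))
    - (1/(2*θ)) * Real.exp (-θ*T) *
      (σ^4 * (Real.exp (θ*t) - Real.exp (-θ*t)) * (Real.exp (θ*s) - Real.exp (-θ*s))) /
      (σ^2 * (Real.exp (θ*T) - Real.exp (-θ*T)))

theorem ouBridgeCov_comm (T σ θ s t : ℝ) : ouBridgeCov T σ θ s t = ouBridgeCov T σ θ t s := by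
  unfold ouBridgeCov; rw [min_comm, add_comm s]; ring

theorem ouBridgeCov_eq_of_le {T σ θ s t : ℝ} (hσ : σ ≠ 0) (hθT : θ * T ≠ 0) (hts : t ≤ s) :
    ouBridgeCov T σ θ s t = σ^2 / (θ * sinh (θ * T)) * (sinh (θ * t) * sinh (θ * (T - s))) := by
  have hθ : θ ≠ 0 := left_ne_zero_of_mul hθT
  have hE : exp (θ * T) ^ 2 - 1 ≠ 0 := by
    rw [sub_ne_zero, ← exp_nat_mul, Ne, exp_eq_one_iff]
    simpa using hθT
  unfold ouBridgeCov
  rw [min_eq_right hts]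
  simp only [sinh_eq, mul_sub, neg_mul, mul_add, exp_add, exp_sub, exp_neg]
  rw [show 2 * θ * t = θ * t + θ * t by ring, exp_add]
  field_simp
  ring

noncomputable def ouGreen (θ T s t : ℝ) : ℝ := sinh (θ * min s t) * sinh (θ * (T - max s t))

theorem ouBridgeCov_eq_mul_ouGreen {T σ θ : ℝ} (hσ : σ ≠ 0) (hθT : θ * T ≠ 0) (s t : ℝ) :
    ouBridgeCov T σ θ s t = σ ^ 2 / (θ * sinh (θ * T)) * ouGreen θ T s t := by
  rcases le_total t s with h | h
  · rw [ouBridgeCov_eq_of_le hσ hθT h, ouGreen, min_eq_right h, max_eq_left h]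
  · rw [ouBridgeCov_comm, ouBridgeCov_eq_of_le hσ hθT h, ouGreen, min_eq_left h, max_eq_right h]

noncomputable def greenPotential (θ T : ℝ) (g : ℝ → ℝ) (x : ℝ) : ℝ :=
  sinh (θ * (T - x)) * (∫ r in 0..x, sinh (θ * r) * g r)
    + sinh (θ * x) * ∫ r in x..T, sinh (θ * (T - r)) * g r

noncomputable def greenPotentialDeriv (θ T : ℝ) (g : ℝ → ℝ) (x : ℝ) : ℝ :=
  θ * (cosh (θ * x) * (∫ r in x..T, sinh (θ * (T - r)) * g r)
    - cosh (θ * (T - x)) * ∫ r in 0..x, sinh (θ * r) * g r)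

theorem greenPotential_apply_zero (θ T : ℝ) (g : ℝ → ℝ) : greenPotential θ T g 0 = 0 := by
  simp [greenPotential]

theorem greenPotential_apply_self (θ T : ℝ) (g : ℝ → ℝ) : greenPotential θ T g T = 0 := by
  simp [greenPotential]

section
variable {θ T : ℝ} {g : ℝ → ℝ}

theorem integral_ouGreen_mul (hg : Continuous g) {x : ℝ} (hx : x ∈ Icc 0 T) :
    ∫ t in 0..T, ouGreen θ T x t * g t = greenPotential θ T g x := by
  have hcont : Continuous fun t => ouGreen θ T x t * g t := by unfold ouGreen; fun_prop
  rw [← integral_add_adjacent_intervals (hcont.intervalIntegrable 0 x)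
    (hcont.intervalIntegrable x T), greenPotential, ← integral_const_mul, ← integral_const_mul]
  congr 1 <;> refine integral_congr fun t ht => ?_
  · rw [uIcc_of_le hx.1] at ht
    simp only [ouGreen, min_eq_right ht.2, max_eq_left ht.2]
    ring
  · rw [uIcc_of_le hx.2] at ht
    simp only [ouGreen, min_eq_left ht.1, max_eq_right ht.1]
    ring

theorem hasDerivAt_greenPotential (hg : Continuous g) (x : ℝ) :
    HasDerivAt (greenPotential θ T g) (greenPotentialDeriv θ T g x) x := by
  have hu : Continuous fun r => sinh (θ * r) * g r := by fun_prop
  have hv : Continuous fun r => sinh (θ * (T - r)) * g r := by fun_prop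
  have hA := (hu.integral_hasStrictDerivAt 0 x).hasDerivAt
  have hB := integral_hasDerivAt_left (hv.intervalIntegrable x T)
    (hv.stronglyMeasurableAtFilter _ _) hv.continuousAt
  have h1 := (((hasDerivAt_id x).const_sub T).const_mul θ).sinh
  have h2 := ((hasDerivAt_id x).const_mul θ).sinh
  refine ((h1.mul hA).add (h2.mul hB)).congr_deriv ?_
  simp only [greenPotentialDeriv, id]
  ring

theorem hasDerivAt_greenPotentialDeriv (hg : Continuous g) (x : ℝ) :
    HasDerivAt (greenPotentialDeriv θ T g)
      (θ ^ 2 * greenPotential θ T g x - θ * sinh (θ * T) * g x) x := by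
  have hu : Continuous fun r => sinh (θ * r) * g r := by fun_prop
  have hv : Continuous fun r => sinh (θ * (T - r)) * g r := by fun_prop
  have hA := (hu.integral_hasStrictDerivAt 0 x).hasDerivAt
  have hB := integral_hasDerivAt_left (hv.intervalIntegrable x T)
    (hv.stronglyMeasurableAtFilter _ _) hv.continuousAt
  have h1 := (((hasDerivAt_id x).const_sub T).const_mul θ).cosh
  have h2 := ((hasDerivAt_id x).const_mul θ).cosh
  refine (((h2.mul hB).sub (h1.mul hA)).const_mul θ).congr_deriv ?_
  have hadd : sinh (θ * T) =
      sinh (θ * x) * cosh (θ * (T - x)) + cosh (θ * x) * sinh (θ * (T - x)) := by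
    rw [← sinh_add]; ring_nf
  simp only [greenPotential, id, hadd]
  ring

theorem integral_ouBridgeCov_mul {σ : ℝ} (hσ : σ ≠ 0) (hθT : θ * T ≠ 0) (hg : Continuous g)
    {x : ℝ} (hx : x ∈ Icc 0 T) :
    ∫ t in 0..T, ouBridgeCov T σ θ x t * g t =
      σ ^ 2 / (θ * sinh (θ * T)) * greenPotential θ T g x := by
  simp only [← integral_ouGreen_mul hg hx, ← integral_const_mul,
    ouBridgeCov_eq_mul_ouGreen hσ hθT, mul_assoc]

end

section
variable {G D : ℝ → ℝ} {a b : ℝ}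

theorem eq_left_of_hasDerivAt_zero {f : ℝ → ℝ} (hf : ∀ x ∈ Icc a b, HasDerivAt f 0 x) :
    ∀ x ∈ Icc a b, f x = f a :=
  constant_of_has_deriv_right_zero (fun x hx => (hf x hx).continuousAt.continuousWithinAt)
    fun x hx => (hf x (Ico_subset_Icc_self hx)).hasDerivWithinAt

/-- `(G D)' = D² + k G² ≥ 0`, so `G D` vanishes between its zeros at `a` and `b`,
and then `(G²)' = 2 G D = 0`. -/
theorem eqOn_zero_of_dirichlet_of_nonneg {k : ℝ} (hk : 0 ≤ k)
    (hG : ∀ x ∈ Icc a b, HasDerivAt G (D x) x) (hD : ∀ x ∈ Icc a b, HasDerivAt D (k * G x) x)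
    (ha : G a = 0) (hb : G b = 0) : EqOn G 0 (Icc a b) := by
  have hGD : ∀ x ∈ Icc a b, HasDerivAt (fun y => G y * D y) (D x * D x + G x * (k * G x)) x :=
    fun x hx => (hG x hx).mul (hD x hx)
  have hmono : MonotoneOn (fun y => G y * D y) (Icc a b) :=
    monotoneOn_of_hasDerivWithinAt_nonneg (convex_Icc a b)
      (fun x hx => (hGD x hx).continuousAt.continuousWithinAt)
      (fun x hx => (hGD x (interior_subset hx)).hasDerivWithinAt)
      fun x _ => by nlinarith [mul_self_nonneg (D x), mul_nonneg hk (mul_self_nonneg (G x))]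
  have hGD_zero : ∀ x ∈ Icc a b, G x * D x = 0 := fun x hx => by
    have hab : a ≤ b := hx.1.trans hx.2
    have h₁ := hmono (left_mem_Icc.2 hab) hx hx.1
    have h₂ := hmono hx (right_mem_Icc.2 hab) hx.2
    simp only [ha, hb, zero_mul] at h₁ h₂
    linarith
  have hsq := eq_left_of_hasDerivAt_zero (f := fun y => G y * G y) fun x hx =>
    ((hG x hx).mul (hG x hx)).congr_deriv (by linarith [hGD_zero x hx])
  intro x hx
  simpa [ha] using hsq x hx

/-- The energy `D² + ω² G²` is conserved and vanishes at `b`. -/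
theorem eqOn_zero_of_hasDerivAt_neg_sq {ω : ℝ} (hω : ω ≠ 0)
    (hG : ∀ x ∈ Icc a b, HasDerivAt G (D x) x)
    (hD : ∀ x ∈ Icc a b, HasDerivAt D (-ω ^ 2 * G x) x)
    (hGb : G b = 0) (hDb : D b = 0) : EqOn G 0 (Icc a b) := by
  intro x hx
  have hE := eq_left_of_hasDerivAt_zero (f := fun y => D y * D y + ω ^ 2 * (G y * G y))
    fun x hx => (((hD x hx).mul (hD x hx)).add (((hG x hx).mul (hG x hx)).const_mul _)).congr_deriv
      (by ring)
  have hEx : D x * D x + ω ^ 2 * (G x * G x) = 0 := by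
    rw [hE x hx, ← hE b (right_mem_Icc.2 (hx.1.trans hx.2)), hGb, hDb]
    ring
  have hω2 : 0 < ω ^ 2 := by positivity
  have : G x * G x = 0 := by nlinarith [mul_self_nonneg (D x), mul_self_nonneg (G x)]
  exact mul_self_eq_zero.1 this

theorem eq_sin_of_hasDerivAt_neg_sq {ω : ℝ} (hω : ω ≠ 0)
    (hG : ∀ x ∈ Icc a b, HasDerivAt G (D x) x)
    (hD : ∀ x ∈ Icc a b, HasDerivAt D (-ω ^ 2 * G x) x) (hGb : G b = 0) :
    ∀ x ∈ Icc a b, G x = D b / ω * sin (ω * (x - b)) := by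
  have hlin : ∀ x : ℝ, HasDerivAt (fun y => ω * (y - b)) ω x := fun x => by
    simpa using ((hasDerivAt_id x).sub_const b).const_mul ω
  have hzero := eqOn_zero_of_hasDerivAt_neg_sq (G := fun x => G x - D b / ω * sin (ω * (x - b)))
    (D := fun x => D x - D b * cos (ω * (x - b))) hω
    (fun x hx => ((hG x hx).sub ((hlin x).sin.const_mul _)).congr_deriv (by field_simp))
    (fun x hx => ((hD x hx).sub ((hlin x).cos.const_mul _)).congr_deriv (by field_simp; ring))
    (by simp [hGb]) (by simp)
  intro x hx
  exact sub_eq_zero.1 (hzero hx)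

end

theorem exists_nat_eq_of_sin_mul_eq_zero {ω T : ℝ} (hω : 0 < ω) (hT : 0 < T)
    (h : sin (ω * T) = 0) : ∃ n : ℕ, 1 ≤ n ∧ ω = n * π / T := by
  obtain ⟨m, hm⟩ := sin_eq_zero_iff.1 h
  have hm_pos : 0 < m := by
    have : (0 : ℝ) < m * π := hm ▸ mul_pos hω hT
    exact_mod_cast pos_of_mul_pos_left this pi_pos.le
  lift m to ℕ using hm_pos.le
  refine ⟨m, by omega, ?_⟩
  rw [eq_div_iff hT.ne']
  exact_mod_cast hm.symm

theorem exists_eq_sin_of_dirichlet {G D : ℝ → ℝ} {k T : ℝ} (hT : 0 < T)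
    (hG : ∀ x ∈ Icc 0 T, HasDerivAt G (D x) x) (hD : ∀ x ∈ Icc 0 T, HasDerivAt D (k * G x) x)
    (h0 : G 0 = 0) (hGT : G T = 0) (hne : ∃ x ∈ Icc 0 T, G x ≠ 0) :
    ∃ n : ℕ, 1 ≤ n ∧ k = -(n * π / T) ^ 2 ∧
      ∃ C ≠ 0, ∀ x ∈ Icc 0 T, G x = C * sin (n * π / T * (x - T)) := by
  obtain ⟨x₀, hx₀, hGx₀⟩ := hne
  rcases le_or_gt 0 k with hk | hk
  · exact absurd (eqOn_zero_of_dirichlet_of_nonneg hk hG hD h0 hGT hx₀) hGx₀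
  set ω := √(-k)
  have hω : 0 < ω := sqrt_pos.2 (neg_pos.2 hk)
  have hkω : k = -ω ^ 2 := by rw [sq_sqrt (neg_nonneg.2 hk.le), neg_neg]
  have hsin := eq_sin_of_hasDerivAt_neg_sq hω.ne' hG (hkω ▸ hD) hGT
  have hC : D T / ω ≠ 0 := by
    rintro hC
    exact hGx₀ (by simp [hsin x₀ hx₀, hC])
  have hsinT : sin (ω * T) = 0 := by
    have := hsin 0 (left_mem_Icc.2 hT.le)
    rw [h0, zero_sub, mul_neg, sin_neg, eq_comm, mul_eq_zero] at this
    simpa [hC] using this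
  obtain ⟨n, hn, hωn⟩ := exists_nat_eq_of_sin_mul_eq_zero hω hT hsinT
  exact ⟨n, hn, hωn ▸ hkω, D T / ω, hC, hωn ▸ hsin⟩

/-- for the Ornstein–Uhlenbeck bridge with deterministic starting
point (σ₀ = 0), every continuous eigenfunction of the covariance operator with
positive eigenvalue λ is a multiple of t ↦ sin((nπ/T)(t−T)) for some integer
n ≥ 1, with λ = σ²/((nπ/T)² + θ²). -/
theorem ou_bridge_deterministic_start_eigen_classification
    (T σ θ : ℝ) (hT : 0 < T) (hσ : 0 < σ) (hθ : θ ≠ 0)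
    (c : ℝ → ℝ → ℝ)
    (hc : ∀ s t : ℝ, c s t = (1/(2*θ)) * Real.exp (-θ*(s+t)) *
        (-(σ^2) + σ^2 * Real.exp (2*θ*(min s t)))
      - (1/(2*θ)) * Real.exp (-θ*T) *
        (σ^4 * (Real.exp (θ*t) - Real.exp (-θ*t)) * (Real.exp (θ*s) - Real.exp (-θ*s))) /
        (σ^2 * (Real.exp (θ*T) - Real.exp (-θ*T))))
    (f : ℝ → ℝ) (hf : ContinuousOn f (Icc (0:ℝ) T))
    (hfne : ∃ t ∈ Icc (0:ℝ) T, f t ≠ 0)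
    (lam : ℝ) (hlam : 0 < lam)
    (heigen : ∀ s ∈ Icc (0:ℝ) T, (∫ t in (0:ℝ)..T, c s t * f t) = lam * f s) :
    ∃ n : ℕ, 1 ≤ n ∧ ∃ C : ℝ, C ≠ 0 ∧
      lam = σ^2 / ((n*Real.pi/T)^2 + θ^2) ∧
      ∀ t ∈ Icc (0:ℝ) T, f t = C * Real.sin ((n*Real.pi/T) * (t - T)) := by
  have hθT : θ * T ≠ 0 := mul_ne_zero hθ hT.ne'
  set K := σ ^ 2 / (θ * sinh (θ * T))
  have hθsinh : θ * sinh (θ * T) ≠ 0 := mul_ne_zero hθ (sinh_ne_zero.2 hθT)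
  have hK : K ≠ 0 := div_ne_zero (by positivity) hθsinh
  have hθsinhK : θ * sinh (θ * T) * K = σ ^ 2 := mul_div_cancel₀ _ hθsinh
  have hc' : ∀ s t, c s t = ouBridgeCov T σ θ s t := hc
  -- extended continuously to `ℝ` so that the fundamental theorem of calculus applies at `0` and `T`
  set g : ℝ → ℝ := fun x => f (projIcc 0 T hT.le x)
  have hg : Continuous g :=
    hf.comp_continuous (continuous_subtype_val.comp continuous_projIcc) fun x => (projIcc 0 T _ x).2
  have hgf : ∀ x ∈ Icc 0 T, g x = f x := fun x hx => by simp [g, projIcc_of_mem _ hx]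
  have hGf : ∀ x ∈ Icc 0 T, f x = K / lam * greenPotential θ T g x := fun x hx => by
    rw [div_mul_eq_mul_div, eq_div_iff hlam.ne', mul_comm, ← heigen x hx,
      ← integral_ouBridgeCov_mul hσ.ne' hθT hg hx]
    refine integral_congr fun t ht => ?_
    rw [uIcc_of_le hT.le] at ht
    rw [hc', hgf t ht]
  have hD : ∀ x ∈ Icc 0 T, HasDerivAt (greenPotentialDeriv θ T g)
      ((θ ^ 2 - σ ^ 2 / lam) * greenPotential θ T g x) x := fun x hx =>
    (hasDerivAt_greenPotentialDeriv hg x).congr_deriv <| by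
      rw [hgf x hx, hGf x hx]
      linear_combination -(greenPotential θ T g x / lam) * hθsinhK
  obtain ⟨n, hn, hk, C, hC, hGsin⟩ := exists_eq_sin_of_dirichlet hT
    (fun x _ => hasDerivAt_greenPotential hg x) hD (greenPotential_apply_zero θ T g)
    (greenPotential_apply_self θ T g) (by
      obtain ⟨x, hx, hfx⟩ := hfne
      exact ⟨x, hx, fun hGx => hfx (by rw [hGf x hx, hGx, mul_zero])⟩)
  refine ⟨n, hn, K / lam * C, mul_ne_zero (div_ne_zero hK hlam.ne') hC, ?_, fun t ht => ?_⟩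
  · rw [← neg_neg ((n * π / T) ^ 2), ← hk]
    field_simp
    ring
  · rw [hGf t ht, hGsin t ht, mul_assoc]
end
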